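/- arXiv:1908.04834 — 4 statements merged into one kernel-verified Lean document; each statement's English description precedes it below -/
import Mathlib

section
/- For a > 0 and 0 ≤ ω < a, if u : ℝ → ℝ is continuous with sup_y |u(y)| e^{ω|y|} =: M < ∞, then the convolution v(y) := ∫_{-∞}^{∞} -(1/(2a)) e^{-a|y-z|} u(z) dz satisfies |v(y)| e^{ω|y|} ≤ (1/(a^2 - ω^2)) M + (ω/(a(a^2 - ω^2))) M for all y; in particular v decays at the same exponential rate ω. -/
/-!
Bound `|u z|` by `M e^{-ω|z|}` and use `|y| ≤ |y - z| + |z|` to move the weight out of the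
integral: `e^{-a|y-z|} e^{-ω|z|} ≤ e^{-(a-ω)|y-z|} e^{-ω|y|}`. What remains is the integral of
`e^{-(a-ω)|x|}`, which is `2/(a-ω)`, and `(1/(2a)) · 2M/(a-ω)` is the stated constant.
-/

open MeasureTheory Real

lemma integral_exp_neg_mul_abs {c : ℝ} (hc : 0 < c) : ∫ x, exp (-c * |x|) = 2 / c := by
  rw [integral_comp_abs (f := fun t => exp (-c * t)), integral_exp_mul_Ioi (neg_lt_zero.2 hc)]
  field_simp
  simp

/-- `integral_comp_abs` needs no integrability, so the nonzero value computed above forces it. -/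
lemma integrable_exp_neg_mul_abs {c : ℝ} (hc : 0 < c) :
    Integrable fun x : ℝ => exp (-c * |x|) :=
  .of_integral_ne_zero (by rw [integral_exp_neg_mul_abs hc]; positivity)

lemma exp_neg_mul_abs_sub_mul_exp_neg_mul_abs_le {ω : ℝ} (hω : 0 ≤ ω) (a y z : ℝ) :
    exp (-a * |y - z|) * exp (-ω * |z|) ≤ exp (-(a - ω) * |y - z|) * exp (-ω * |y|) := by
  rw [← exp_add, ← exp_add, exp_le_exp]
  have : ω * |y| ≤ ω * (|y - z| + |z|) :=
    mul_le_mul_of_nonneg_left (by simpa using abs_sub_abs_le_abs_sub y z) hω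
  linarith

theorem abs_integral_exp_neg_mul_abs_sub_mul_le {a ω M : ℝ} (hω : 0 ≤ ω) (hωa : ω < a)
    {u : ℝ → ℝ} (hu : ∀ z, |u z| ≤ M * exp (-ω * |z|)) (y : ℝ) :
    |∫ z, exp (-a * |y - z|) * u z| ≤ 2 * M / (a - ω) * exp (-ω * |y|) := by
  have hc : 0 < a - ω := sub_pos.2 hωa
  have hM : 0 ≤ M := by simpa using (abs_nonneg (u 0)).trans (hu 0)
  have hdom : ∀ z, ‖exp (-a * |y - z|) * u z‖ ≤
      M * exp (-ω * |y|) * exp (-(a - ω) * |y - z|) := fun z => by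
    calc ‖exp (-a * |y - z|) * u z‖ = exp (-a * |y - z|) * |u z| := by
          rw [norm_mul, norm_of_nonneg (exp_pos _).le, norm_eq_abs]
      _ ≤ exp (-a * |y - z|) * (M * exp (-ω * |z|)) := by gcongr; exact hu z
      _ = M * (exp (-a * |y - z|) * exp (-ω * |z|)) := by ring
      _ ≤ M * (exp (-(a - ω) * |y - z|) * exp (-ω * |y|)) :=
          mul_le_mul_of_nonneg_left (exp_neg_mul_abs_sub_mul_exp_neg_mul_abs_le hω a y z) hM
      _ = M * exp (-ω * |y|) * exp (-(a - ω) * |y - z|) := by ring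
  have hint : Integrable fun z => M * exp (-ω * |y|) * exp (-(a - ω) * |y - z|) :=
    ((integrable_exp_neg_mul_abs hc).comp_sub_left y).const_mul _
  calc |∫ z, exp (-a * |y - z|) * u z|
      ≤ ∫ z, M * exp (-ω * |y|) * exp (-(a - ω) * |y - z|) :=
        norm_integral_le_of_norm_le hint (.of_forall hdom)
    _ = 2 * M / (a - ω) * exp (-ω * |y|) := by
        rw [integral_const_mul, integral_sub_left_eq_self (fun x => exp (-(a - ω) * |x|)),
          integral_exp_neg_mul_abs hc]
        ring

theorem green_weighted_bound_general (a ω M : ℝ) (ha : 0 < a) (hω0 : 0 ≤ ω) (hωa : ω < a)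
    (u : ℝ → ℝ)
    (hM : ∀ y, |u y| * Real.exp (ω * |y|) ≤ M) :
    ∀ y, |∫ z, (-(1 / (2 * a)) * Real.exp (-a * |y - z|)) * u z| * Real.exp (ω * |y|)
      ≤ (1 / (a ^ 2 - ω ^ 2)) * M + (ω / (a * (a ^ 2 - ω ^ 2))) * M := by
  intro y
  have hu : ∀ z, |u z| ≤ M * exp (-ω * |z|) := fun z => by
    rw [neg_mul, exp_neg, ← div_eq_mul_inv, le_div_iff₀ (exp_pos _)]
    exact hM z
  calc |∫ z, (-(1 / (2 * a)) * exp (-a * |y - z|)) * u z| * exp (ω * |y|)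
      = 1 / (2 * a) * |∫ z, exp (-a * |y - z|) * u z| * exp (ω * |y|) := by
        simp_rw [mul_assoc, integral_const_mul]
        rw [abs_mul, abs_neg, abs_of_pos (by positivity : (0 : ℝ) < 1 / (2 * a)), mul_assoc]
    _ ≤ 1 / (2 * a) * (2 * M / (a - ω) * exp (-ω * |y|)) * exp (ω * |y|) := by
        gcongr
        exact abs_integral_exp_neg_mul_abs_sub_mul_le hω0 hωa hu y
    _ = 1 / (2 * a) * (2 * M / (a - ω)) * (exp (-ω * |y|) * exp (ω * |y|)) := by ring
    _ = (1 / (a ^ 2 - ω ^ 2)) * M + (ω / (a * (a ^ 2 - ω ^ 2))) * M := by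
        have hc : a - ω ≠ 0 := (sub_pos.2 hωa).ne'
        rw [← exp_add, neg_mul, neg_add_cancel, exp_zero, mul_one,
          show a ^ 2 - ω ^ 2 = (a - ω) * (a + ω) by ring]
        field_simp

/-- weighted bound for the Green's operator of `L_a u = u'' - a² u`:
if `|u(y)| e^{ω|y|} ≤ M` with `0 ≤ ω < a`, then the convolution
`v(y) = ∫ -(1/(2a)) e^{-a|y-z|} u(z) dz` satisfies
`|v(y)| e^{ω|y|} ≤ M/(a²-ω²) + ω M/(a(a²-ω²))`. -/
theorem green_weighted_bound (a ω M : ℝ) (ha : 0 < a) (hω0 : 0 ≤ ω) (hωa : ω < a)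
    (u : ℝ → ℝ) (hu : Continuous u)
    (hM : ∀ y, |u y| * Real.exp (ω * |y|) ≤ M) :
    ∀ y, |∫ z, (-(1 / (2 * a)) * Real.exp (-a * |y - z|)) * u z| * Real.exp (ω * |y|)
      ≤ (1 / (a ^ 2 - ω ^ 2)) * M + (ω / (a * (a ^ 2 - ω ^ 2))) * M :=
  green_weighted_bound_general a ω M ha hω0 hωa u hM
end

section
/- Let X be a metric space, E, F Banach spaces, Ω ⊆ E open and convex, and Φ : Ω → F continuously differentiable with Lipschitz derivative (Φ ∈ C^{1,1}). Then for α ∈ (0,1], the composition operator C_Φ[f] := Φ ∘ f is continuous as a map from the set of bounded α-Hölder functions f : X → Ω (with values uniformly bounded away from the complement of Ω) into the space of bounded α-Hölder functions X → F, with respect to the C^{0,α}-norms. -/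
open ENNReal

/-- The `C^{0,α}`-norm (sup-norm plus `α`-Hölder seminorm), valued in `ℝ≥0∞`. -/
noncomputable def holderNorm {X E : Type*} [MetricSpace X] [NormedAddCommGroup E]
    (α : ℝ) (f : X → E) : ℝ≥0∞ :=
  (⨆ x, (‖f x‖₊ : ℝ≥0∞)) +
    ⨆ x, ⨆ y, ⨆ _ : x ≠ y, (‖f x - f y‖₊ : ℝ≥0∞) / edist x y ^ α

/-- Membership in `𝒪^{0,α}(X, Ω)`: `f` is bounded `α`-Hölder, takes values in `Ω`, and its
image is uniformly bounded away from the complement of `Ω`. -/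
def memO {X E : Type*} [MetricSpace X] [NormedAddCommGroup E]
    (α : ℝ) (Ω : Set E) (f : X → E) : Prop :=
  holderNorm α f < ⊤ ∧ (∀ x, f x ∈ Ω) ∧ ∃ ε > (0 : ℝ), ∀ x, ε ≤ Metric.infDist (f x) Ωᶜ

/-! For `a, a', b, b'` in the convex set `Ω`, the mean value inequality applied to
`t ↦ Φ (a + t (a' - a)) - Φ (b + t (b' - b))` gives the second-order difference estimate
`‖Φ a' - Φ a - (Φ b' - Φ b)‖ ≤ L (‖a - b‖ + ‖a' - b'‖) ‖a' - a‖ + K ‖(a' - a) - (b' - b)‖`.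
With `a, a', b, b' = f x, g x, f y, g y`, dividing by `d(x, y)^α` bounds the Hölder seminorm of
`Φ ∘ g - Φ ∘ f`, and the `K`-Lipschitz continuity of `Φ` bounds its sup part, so that
`‖Φ ∘ g - Φ ∘ f‖ ≤ (L (‖f‖ + ‖g‖) + K) ‖g - f‖`
in `C^{0,α}`: the composition operator is locally Lipschitz. -/

open Set AffineMap

section SecondDifference

variable {E F : Type*} [NormedAddCommGroup E] [NormedSpace ℝ E]
  [NormedAddCommGroup F] [NormedSpace ℝ F]

theorem norm_lineMap_le_max (u v : E) {t : ℝ} (ht : t ∈ Icc (0 : ℝ) 1) :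
    ‖lineMap u v t‖ ≤ max ‖u‖ ‖v‖ :=
  convexOn_univ_norm.le_on_segment (mem_univ u) (mem_univ v)
    (segment_eq_image_lineMap ℝ u v ▸ mem_image_of_mem _ ht)

variable {Ω : Set E} {Φ : E → F} {Φ' : E → E →L[ℝ] F} {L K : NNReal}

theorem Convex.norm_sub_sub_sub_le_of_lipschitzOnWith_fderiv (hΩ : Convex ℝ Ω)
    (hd : ∀ x ∈ Ω, HasFDerivAt Φ (Φ' x) x) (hL : LipschitzOnWith L Φ' Ω)
    (hK : ∀ x ∈ Ω, ‖Φ' x‖ ≤ K) {a a' b b' : E}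
    (ha : a ∈ Ω) (ha' : a' ∈ Ω) (hb : b ∈ Ω) (hb' : b' ∈ Ω) :
    ‖Φ a' - Φ a - (Φ b' - Φ b)‖ ≤
      L * (‖a - b‖ + ‖a' - b'‖) * ‖a' - a‖ + K * ‖a' - a - (b' - b)‖ := by
  have hderiv : ∀ t ∈ Icc (0 : ℝ) 1,
      HasDerivAt (fun t => Φ (lineMap a a' t) - Φ (lineMap b b' t))
        (Φ' (lineMap a a' t) (a' - a) - Φ' (lineMap b b' t) (b' - b)) t := fun t ht =>
    ((hd _ (hΩ.lineMap_mem ha ha' ht)).comp_hasDerivAt t hasDerivAt_lineMap).sub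
      ((hd _ (hΩ.lineMap_mem hb hb' ht)).comp_hasDerivAt t hasDerivAt_lineMap)
  have hbound : ∀ t ∈ Ico (0 : ℝ) 1,
      ‖Φ' (lineMap a a' t) (a' - a) - Φ' (lineMap b b' t) (b' - b)‖ ≤
        L * (‖a - b‖ + ‖a' - b'‖) * ‖a' - a‖ + K * ‖a' - a - (b' - b)‖ := by
    intro t ht
    have ht : t ∈ Icc (0 : ℝ) 1 := Ico_subset_Icc_self ht
    set p := lineMap a a' t
    set q := lineMap b b' t
    have hp : p ∈ Ω := hΩ.lineMap_mem ha ha' ht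
    have hq : q ∈ Ω := hΩ.lineMap_mem hb hb' ht
    have hpq : ‖Φ' p - Φ' q‖ ≤ L * (‖a - b‖ + ‖a' - b'‖) := by
      calc ‖Φ' p - Φ' q‖ ≤ L * ‖p - q‖ := by
            simpa only [dist_eq_norm] using hL.dist_le_mul p hp q hq
        _ ≤ L * (‖a - b‖ + ‖a' - b'‖) := by
            gcongr
            rw [← vsub_eq_sub, lineMap_vsub_lineMap]
            exact (norm_lineMap_le_max _ _ ht).trans
              (max_le_add_of_nonneg (norm_nonneg _) (norm_nonneg _))
    calc ‖Φ' p (a' - a) - Φ' q (b' - b)‖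
        = ‖(Φ' p - Φ' q) (a' - a) + Φ' q (a' - a - (b' - b))‖ := by
          congr 1
          simp only [sub_apply, map_sub]
          abel
      _ ≤ ‖Φ' p - Φ' q‖ * ‖a' - a‖ + ‖Φ' q‖ * ‖a' - a - (b' - b)‖ :=
          (norm_add_le _ _).trans (add_le_add (ContinuousLinearMap.le_opNorm _ _)
            (ContinuousLinearMap.le_opNorm _ _))
      _ ≤ L * (‖a - b‖ + ‖a' - b'‖) * ‖a' - a‖ + K * ‖a' - a - (b' - b)‖ := by
          gcongr
          exact hK q hq
  rw [sub_sub_sub_comm]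
  simpa only [lineMap_apply_one, lineMap_apply_zero] using
    norm_image_sub_le_of_norm_deriv_le_segment_01'
      (fun t ht => (hderiv t ht).hasDerivWithinAt) hbound

end SecondDifference

section HolderNorm

variable {X E : Type*} [NormedAddCommGroup E] {α : ℝ}

noncomputable def supENorm (f : X → E) : ℝ≥0∞ :=
  ⨆ x, (‖f x‖₊ : ℝ≥0∞)

theorem nnnorm_le_supENorm (f : X → E) (x : X) : (‖f x‖₊ : ℝ≥0∞) ≤ supENorm f :=
  le_iSup (fun x => (‖f x‖₊ : ℝ≥0∞)) x

theorem supENorm_add_le (f g : X → E) :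
    supENorm (fun x => f x + g x) ≤ supENorm f + supENorm g :=
  iSup_le fun x => (ENNReal.coe_le_coe.2 (nnnorm_add_le _ _)).trans <| by
    push_cast
    exact add_le_add (nnnorm_le_supENorm f x) (nnnorm_le_supENorm g x)

variable [MetricSpace X]

noncomputable def holderESeminorm (α : ℝ) (f : X → E) : ℝ≥0∞ :=
  ⨆ x, ⨆ y, ⨆ _ : x ≠ y, (‖f x - f y‖₊ : ℝ≥0∞) / edist x y ^ α

theorem holderNorm_eq_add (f : X → E) :
    holderNorm α f = supENorm f + holderESeminorm α f :=
  rfl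

theorem nnnorm_sub_div_le_holderESeminorm (f : X → E) {x y : X} (hxy : x ≠ y) :
    (‖f x - f y‖₊ : ℝ≥0∞) / edist x y ^ α ≤ holderESeminorm α f :=
  le_iSup₂_of_le x y (le_iSup_of_le hxy le_rfl)

theorem holderESeminorm_le {f : X → E} {C : ℝ≥0∞}
    (h : ∀ x y, x ≠ y → (‖f x - f y‖₊ : ℝ≥0∞) / edist x y ^ α ≤ C) :
    holderESeminorm α f ≤ C :=
  iSup₂_le fun x y => iSup_le (h x y)

theorem holderESeminorm_add_le (f g : X → E) :
    holderESeminorm α (fun x => f x + g x) ≤ holderESeminorm α f + holderESeminorm α g := by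
  refine holderESeminorm_le fun x y hxy => ?_
  calc (‖f x + g x - (f y + g y)‖₊ : ℝ≥0∞) / edist x y ^ α
      ≤ ((‖f x - f y‖₊ : ℝ≥0∞) + ‖g x - g y‖₊) / edist x y ^ α := by
        gcongr
        rw [add_sub_add_comm]
        exact_mod_cast nnnorm_add_le _ _
    _ = (‖f x - f y‖₊ : ℝ≥0∞) / edist x y ^ α +
          (‖g x - g y‖₊ : ℝ≥0∞) / edist x y ^ α :=
        ENNReal.add_div
    _ ≤ _ := add_le_add (nnnorm_sub_div_le_holderESeminorm f hxy)
        (nnnorm_sub_div_le_holderESeminorm g hxy)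

theorem holderNorm_add_le (f g : X → E) :
    holderNorm α (fun x => f x + g x) ≤ holderNorm α f + holderNorm α g := by
  simp only [holderNorm_eq_add]
  rw [add_add_add_comm]
  exact add_le_add (supENorm_add_le f g) (holderESeminorm_add_le f g)

theorem holderNorm_le_add_holderNorm_sub (f g : X → E) :
    holderNorm α g ≤ holderNorm α f + holderNorm α (fun x => g x - f x) := by
  simpa only [add_sub_cancel] using holderNorm_add_le (α := α) f (fun x => g x - f x)

end HolderNorm

section Composition

variable {X E F : Type*} [NormedAddCommGroup E] [NormedSpace ℝ E]
  [NormedAddCommGroup F] [NormedSpace ℝ F]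
  {Ω : Set E} {Φ : E → F} {Φ' : E → E →L[ℝ] F} {L K : NNReal} {f g : X → E}

theorem supENorm_comp_sub_comp_le (hΩ : Convex ℝ Ω)
    (hd : ∀ x ∈ Ω, HasFDerivAt Φ (Φ' x) x) (hK : ∀ x ∈ Ω, ‖Φ' x‖ ≤ K)
    (hf : ∀ x, f x ∈ Ω) (hg : ∀ x, g x ∈ Ω) :
    supENorm (fun x => Φ (g x) - Φ (f x)) ≤ K * supENorm (fun x => g x - f x) := by
  have hΦ : LipschitzOnWith K Φ Ω := hΩ.lipschitzOnWith_of_nnnorm_hasFDerivWithin_le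
    (fun x hx => (hd x hx).hasFDerivWithinAt) fun x hx => NNReal.coe_le_coe.1 (hK x hx)
  refine iSup_le fun x => ?_
  calc (‖Φ (g x) - Φ (f x)‖₊ : ℝ≥0∞) ≤ K * ‖g x - f x‖₊ := by
        simpa only [edist_eq_enorm_sub, enorm_eq_nnnorm] using hΦ (hg x) (hf x)
    _ ≤ K * supENorm (fun x => g x - f x) := by
        gcongr
        exact nnnorm_le_supENorm (fun x => g x - f x) x

variable [MetricSpace X] {α : ℝ}

theorem holderESeminorm_comp_sub_comp_le (hΩ : Convex ℝ Ω)
    (hd : ∀ x ∈ Ω, HasFDerivAt Φ (Φ' x) x) (hL : LipschitzOnWith L Φ' Ω)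
    (hK : ∀ x ∈ Ω, ‖Φ' x‖ ≤ K) (hf : ∀ x, f x ∈ Ω) (hg : ∀ x, g x ∈ Ω) :
    holderESeminorm α (fun x => Φ (g x) - Φ (f x)) ≤
      L * (holderESeminorm α f + holderESeminorm α g) * supENorm (fun x => g x - f x) +
        K * holderESeminorm α (fun x => g x - f x) := by
  refine holderESeminorm_le fun x y hxy => ?_
  have key := hΩ.norm_sub_sub_sub_le_of_lipschitzOnWith_fderiv hd hL hK
    (hf x) (hg x) (hf y) (hg y)
  calc (‖Φ (g x) - Φ (f x) - (Φ (g y) - Φ (f y))‖₊ : ℝ≥0∞) / edist x y ^ α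
      ≤ (L * (‖f x - f y‖₊ + ‖g x - g y‖₊) * ‖g x - f x‖₊ +
          K * ‖g x - f x - (g y - f y)‖₊) / edist x y ^ α := by
        gcongr
        exact_mod_cast key
    _ = L * ((‖f x - f y‖₊ : ℝ≥0∞) / edist x y ^ α +
            (‖g x - g y‖₊ : ℝ≥0∞) / edist x y ^ α) * ‖g x - f x‖₊ +
          K * ((‖g x - f x - (g y - f y)‖₊ : ℝ≥0∞) / edist x y ^ α) := by
        simp only [div_eq_mul_inv]
        ring
    _ ≤ _ := by
        gcongr
        · exact nnnorm_sub_div_le_holderESeminorm f hxy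
        · exact nnnorm_sub_div_le_holderESeminorm g hxy
        · exact nnnorm_le_supENorm (fun x => g x - f x) x
        · exact nnnorm_sub_div_le_holderESeminorm (fun x => g x - f x) hxy

theorem holderNorm_comp_sub_comp_le (hΩ : Convex ℝ Ω)
    (hd : ∀ x ∈ Ω, HasFDerivAt Φ (Φ' x) x) (hL : LipschitzOnWith L Φ' Ω)
    (hK : ∀ x ∈ Ω, ‖Φ' x‖ ≤ K) (hf : ∀ x, f x ∈ Ω) (hg : ∀ x, g x ∈ Ω) :
    holderNorm α (fun x => Φ (g x) - Φ (f x)) ≤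
      (L * (holderNorm α f + holderNorm α g) + K) * holderNorm α (fun x => g x - f x) := by
  set h := fun x => g x - f x
  calc holderNorm α (fun x => Φ (g x) - Φ (f x))
      ≤ K * supENorm h + (L * (holderESeminorm α f + holderESeminorm α g) * supENorm h +
          K * holderESeminorm α h) :=
        add_le_add (supENorm_comp_sub_comp_le hΩ hd hK hf hg)
          (holderESeminorm_comp_sub_comp_le hΩ hd hL hK hf hg)
    _ ≤ K * supENorm h + (L * (holderNorm α f + holderNorm α g) *
          (supENorm h + holderESeminorm α h) + K * holderESeminorm α h) := by
        simp only [holderNorm_eq_add]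
        gcongr
        · exact le_add_self
        · exact le_add_self
        · exact le_self_add
    _ = _ := by
        rw [holderNorm_eq_add h]
        ring

end Composition

theorem composition_continuous_general {X E F : Type*} [MetricSpace X]
    [NormedAddCommGroup E] [NormedSpace ℝ E]
    [NormedAddCommGroup F] [NormedSpace ℝ F]
    (α : ℝ)
    (Ω : Set E) (hΩc : Convex ℝ Ω)
    (Φ : E → F) (Φ' : E → E →L[ℝ] F) (L K : ℝ)
    (hd : ∀ x ∈ Ω, HasFDerivAt Φ (Φ' x) x)
    (hL : LipschitzOnWith (Real.toNNReal L) Φ' Ω)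
    (hK : ∀ x ∈ Ω, ‖Φ' x‖ ≤ K) :
    ∀ f : X → E, memO α Ω f →
      ∀ ε : ℝ≥0∞, 0 < ε → ∃ δ : ℝ≥0∞, 0 < δ ∧
        ∀ g : X → E, memO α Ω g → holderNorm α (fun x => g x - f x) < δ →
          holderNorm α (fun x => Φ (g x) - Φ (f x)) < ε := by
  rintro f ⟨hf_fin, hfΩ, -⟩ ε hε
  obtain ⟨δ, hδ, hδC⟩ := ENNReal.exists_pos_mul_lt
    (a := L.toNNReal * (holderNorm α f + (holderNorm α f + 1)) + K.toNNReal)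
    (by finiteness) hε.ne'
  refine ⟨min δ 1, lt_min hδ one_pos, fun g ⟨_, hgΩ, _⟩ hgf => ?_⟩
  have hg_le : holderNorm α g ≤ holderNorm α f + 1 :=
    (holderNorm_le_add_holderNorm_sub f g).trans
      (by gcongr; exact hgf.le.trans (min_le_right _ _))
  calc holderNorm α (fun x => Φ (g x) - Φ (f x))
      ≤ (L.toNNReal * (holderNorm α f + holderNorm α g) + K.toNNReal) *
          holderNorm α (fun x => g x - f x) :=
        holderNorm_comp_sub_comp_le hΩc hd hL (fun x hx => (hK x hx).trans K.le_coe_toNNReal)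
          hfΩ hgΩ
    _ ≤ (L.toNNReal * (holderNorm α f + (holderNorm α f + 1)) + K.toNNReal) * δ := by
        gcongr
        exact hgf.le.trans (min_le_left _ _)
    _ < ε := by rwa [mul_comm]

/-- if `Φ ∈ C^{1,1}(Ω, F)` (differentiable on the open convex set `Ω` with
bounded Lipschitz derivative), then the composition operator `C_Φ[f] := Φ ∘ f` is continuous
from `𝒪^{0,α}(X, Ω)` into `C^{0,α}(X, F)` with respect to the `C^{0,α}`-norms. -/
theorem composition_continuous {X E F : Type*} [MetricSpace X]
    [NormedAddCommGroup E] [NormedSpace ℝ E] [CompleteSpace E]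
    [NormedAddCommGroup F] [NormedSpace ℝ F] [CompleteSpace F]
    (α : ℝ) (hα0 : 0 < α) (hα1 : α ≤ 1)
    (Ω : Set E) (hΩo : IsOpen Ω) (hΩc : Convex ℝ Ω)
    (Φ : E → F) (Φ' : E → E →L[ℝ] F) (L K : ℝ)
    (hd : ∀ x ∈ Ω, HasFDerivAt Φ (Φ' x) x)
    (hL : LipschitzOnWith (Real.toNNReal L) Φ' Ω)
    (hK : ∀ x ∈ Ω, ‖Φ' x‖ ≤ K) :
    ∀ f : X → E, memO α Ω f →
      ∀ ε : ℝ≥0∞, 0 < ε → ∃ δ : ℝ≥0∞, 0 < δ ∧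
        ∀ g : X → E, memO α Ω g → holderNorm α (fun x => g x - f x) < δ →
          holderNorm α (fun x => Φ (g x) - Φ (f x)) < ε :=
  composition_continuous_general α Ω hΩc Φ Φ' L K hd hL hK
end

section
/- Let X be a metric space, E, F Banach spaces, Ω ⊆ E open and convex, and Φ : Ω → F twice continuously differentiable with Lipschitz second derivative (Φ ∈ C^{2,1}). Then the composition operator C_Φ[f] := Φ ∘ f is continuously Fréchet differentiable from 𝒪^{0,α}(X,Ω) into C^{0,α}(X,F), with derivative given by (DC_Φ[f]·g)(x) = DΦ(f(x))·g(x). -/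
open ENNReal

/-!
The crux is that the first-order Taylor remainder `R_b a = Φ (a + b) - Φ a - Φ' a b` depends on
the base point `a` with Lipschitz constant `L ‖b‖²`: the mean value inequality for
`v ↦ Φ (a₁ + v) - Φ (a₂ + v)` on `[0, b]` reduces this to the second difference
`Φ' (a₁ + v) - Φ' a₁ - (Φ' (a₂ + v) - Φ' a₂)`, of size `L ‖v‖ ‖a₁ - a₂‖` because `Φ''` is
`L`-Lipschitz. Splitting `R_{g x} (f x) - R_{g y} (f y)` at `R_{g x} (f y)`, the second piece is
controlled by the `K₂`-Lipschitz bound on `Φ'`, so the `C^{0,α}`-norm of the remainder is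
`O(‖g‖²) = o(‖g‖)`. The same splitting shows that `g ↦ Φ' ∘ g` is locally Lipschitz in the
`C^{0,α}`-norm. All points involved stay in a ball around `f x` that lies in `Ω`, because `f` is
uniformly away from `Ωᶜ`.
-/

open Metric
open scoped NNReal

section Pointwise

variable {E F : Type*} [NormedAddCommGroup E] [NormedSpace ℝ E]
  [NormedAddCommGroup F] [NormedSpace ℝ F] {D : Set E} {G : E → F} {G' : E → E →L[ℝ] F}

theorem Convex.norm_image_sub_sub_fderiv_le_of_lipschitzOnWith {K : ℝ≥0} (hD : Convex ℝ D)
    (hG : ∀ z ∈ D, HasFDerivAt G (G' z) z) (hG' : LipschitzOnWith K G' D) {a z₁ z₂ : E}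
    {r : ℝ} (ha : a ∈ D) (h₁ : z₁ ∈ D) (h₂ : z₂ ∈ D) (hr₁ : ‖z₁ - a‖ ≤ r) (hr₂ : ‖z₂ - a‖ ≤ r) :
    ‖G z₁ - G z₂ - G' a (z₁ - z₂)‖ ≤ K * r * ‖z₁ - z₂‖ := by
  have hs : Convex ℝ (D ∩ closedBall a r) := hD.inter (convex_closedBall a r)
  refine hs.norm_image_sub_le_of_norm_hasFDerivWithin_le'
    (fun z hz => (hG z hz.1).hasFDerivWithinAt) (fun z hz => ?_)
    ⟨h₂, mem_closedBall_iff_norm.2 hr₂⟩ ⟨h₁, mem_closedBall_iff_norm.2 hr₁⟩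
  calc ‖G' z - G' a‖ ≤ K * ‖z - a‖ := hG'.norm_sub_le hz.1 ha
    _ ≤ K * r := by gcongr; exact mem_closedBall_iff_norm.1 hz.2

theorem Convex.norm_sub_sub_sub_le_of_lipschitzOnWith {L : ℝ≥0} (hD : Convex ℝ D)
    (hG : ∀ z ∈ D, HasFDerivAt G (G' z) z) (hG' : LipschitzOnWith L G' D) {a₁ a₂ b : E}
    (h₁ : a₁ ∈ D) (h₂ : a₂ ∈ D) (h₁b : a₁ + b ∈ D) (h₂b : a₂ + b ∈ D) :
    ‖G (a₁ + b) - G a₁ - (G (a₂ + b) - G a₂)‖ ≤ L * ‖b‖ * ‖a₁ - a₂‖ := by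
  have hs : Convex ℝ (D ∩ (· + b) ⁻¹' D) := hD.inter (hD.translate_preimage_left b)
  exact hs.norm_image_sub_le_of_norm_hasFDerivWithin_le (f := fun a => G (a + b) - G a)
    (fun a ha =>
      (((hasFDerivAt_comp_add_right b).2 (hG _ ha.2)).sub (hG a ha.1)).hasFDerivWithinAt)
    (fun a ha => by simpa using hG'.norm_sub_le ha.2 ha.1) ⟨h₂, h₂b⟩ ⟨h₁, h₁b⟩

theorem Convex.norm_taylorRemainder_sub_le {Φ : E → F} {Φ' : E → E →L[ℝ] F}
    {Φ'' : E → E →L[ℝ] E →L[ℝ] F} {L : ℝ≥0} (hD : Convex ℝ D)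
    (hΦ : ∀ z ∈ D, HasFDerivAt Φ (Φ' z) z) (hΦ' : ∀ z ∈ D, HasFDerivAt Φ' (Φ'' z) z)
    (hΦ'' : LipschitzOnWith L Φ'' D) {a₁ a₂ b : E}
    (h₁ : a₁ ∈ D) (h₂ : a₂ ∈ D) (h₁b : a₁ + b ∈ D) (h₂b : a₂ + b ∈ D) :
    ‖Φ (a₁ + b) - Φ a₁ - Φ' a₁ b - (Φ (a₂ + b) - Φ a₂ - Φ' a₂ b)‖
      ≤ L * ‖b‖ * ‖a₁ - a₂‖ * ‖b‖ := by
  set s := (a₁ + ·) ⁻¹' D ∩ (a₂ + ·) ⁻¹' D ∩ closedBall 0 ‖b‖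
  have hs : Convex ℝ s := ((hD.translate_preimage_right a₁).inter
    (hD.translate_preimage_right a₂)).inter (convex_closedBall 0 _)
  have hderiv :
      ∀ v ∈ s, ‖Φ' (a₁ + v) - Φ' (a₂ + v) - (Φ' a₁ - Φ' a₂)‖ ≤ L * ‖b‖ * ‖a₁ - a₂‖ := by
    intro v hv
    calc ‖Φ' (a₁ + v) - Φ' (a₂ + v) - (Φ' a₁ - Φ' a₂)‖
        = ‖Φ' (a₁ + v) - Φ' a₁ - (Φ' (a₂ + v) - Φ' a₂)‖ := by congr 1; abel
      _ ≤ L * ‖v‖ * ‖a₁ - a₂‖ :=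
          hD.norm_sub_sub_sub_le_of_lipschitzOnWith hΦ' hΦ'' h₁ h₂ hv.1.1 hv.1.2
      _ ≤ L * ‖b‖ * ‖a₁ - a₂‖ := by gcongr; simpa using hv.2
  have key := hs.norm_image_sub_le_of_norm_hasFDerivWithin_le'
    (f := fun v => Φ (a₁ + v) - Φ (a₂ + v)) (φ := Φ' a₁ - Φ' a₂)
    (fun v hv => (((hasFDerivAt_comp_add_left a₁).2 (hΦ _ hv.1.1)).sub
      ((hasFDerivAt_comp_add_left a₂).2 (hΦ _ hv.1.2))).hasFDerivWithinAt)
    hderiv (x := 0) (y := b) ⟨⟨by simpa using h₁, by simpa using h₂⟩, by simp⟩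
    ⟨⟨h₁b, h₂b⟩, by simp⟩
  convert key using 2
  · simp only [add_zero, sub_zero, sub_apply]
    abel
  · rw [sub_zero]

end Pointwise

def HolderBound {X E : Type*} [MetricSpace X] [NormedAddCommGroup E] (α N : ℝ) (f : X → E) :
    Prop :=
  (∀ x, ‖f x‖ ≤ N) ∧ ∀ x y, ‖f x - f y‖ ≤ N * dist x y ^ α

section HolderNorm

variable {X E : Type*} [MetricSpace X] [NormedAddCommGroup E] {α N : ℝ} {f : X → E}

theorem holderBound_toReal_holderNorm (hf : holderNorm α f ≠ ⊤) :
    HolderBound α (holderNorm α f).toReal f := by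
  refine ⟨fun x => ?_, fun x y => ?_⟩
  · rw [← ofReal_le_iff_le_toReal hf, ofReal_norm, enorm_eq_nnnorm]
    exact (le_iSup (fun x => (‖f x‖₊ : ℝ≥0∞)) x).trans le_self_add
  rcases eq_or_ne x y with rfl | hxy
  · simp only [sub_self, norm_zero]
    positivity
  have hd : 0 < dist x y := dist_pos.2 hxy
  have hdα : edist x y ^ α = ENNReal.ofReal (dist x y ^ α) := by
    rw [edist_dist, ofReal_rpow_of_pos hd]
  have hquot : (‖f x - f y‖₊ : ℝ≥0∞) / edist x y ^ α ≤ holderNorm α f := by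
    refine le_trans ?_ le_add_self
    exact le_iSup_of_le x <| le_iSup_of_le y <| le_iSup_of_le hxy le_rfl
  rw [hdα, ENNReal.div_le_iff (by simpa using Real.rpow_pos_of_pos hd α) ofReal_ne_top] at hquot
  rw [← toReal_ofReal (by positivity : 0 ≤ dist x y ^ α), ← toReal_mul,
    ← ofReal_le_iff_le_toReal (mul_ne_top hf ofReal_ne_top), ofReal_norm, enorm_eq_nnnorm]
  exact hquot

theorem holderNorm_le_of_holderBound (hf : HolderBound α N f) :
    holderNorm α f ≤ 2 * ENNReal.ofReal N := by
  rw [two_mul]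
  refine add_le_add (iSup_le fun x => ?_)
    (iSup₂_le fun x y => iSup_le fun hxy => ENNReal.div_le_of_le_mul ?_)
  · rw [← enorm_eq_nnnorm, ← ofReal_norm]
    exact ofReal_le_ofReal (hf.1 x)
  · rw [← enorm_eq_nnnorm, ← ofReal_norm, edist_dist, ofReal_rpow_of_pos (dist_pos.2 hxy),
      ← ofReal_mul' (by positivity)]
    exact ofReal_le_ofReal (hf.2 x y)

end HolderNorm

section Composition

variable {X E F : Type*} [MetricSpace X] [NormedAddCommGroup E] [NormedSpace ℝ E]
  [NormedAddCommGroup F] [NormedSpace ℝ F] {D : Set E} {K L : ℝ≥0} {α Nf n : ℝ}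
  {f g : X → E}

theorem HolderBound.taylorRemainder_comp {Φ : E → F} {Φ' : E → E →L[ℝ] F}
    {Φ'' : E → E →L[ℝ] E →L[ℝ] F} (hg : HolderBound α n g) (hD : Convex ℝ D)
    (hΦ : ∀ z ∈ D, HasFDerivAt Φ (Φ' z) z) (hΦ' : ∀ z ∈ D, HasFDerivAt Φ' (Φ'' z) z)
    (hK : LipschitzOnWith K Φ' D) (hL : LipschitzOnWith L Φ'' D) (hNf : 0 ≤ Nf)
    (hf : ∀ x y, ‖f x - f y‖ ≤ Nf * dist x y ^ α) (hfD : ∀ x, closedBall (f x) n ⊆ D) :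
    HolderBound α ((K + L * Nf) * n ^ 2)
      (fun x => Φ (f x + g x) - Φ (f x) - Φ' (f x) (g x)) := by
  have hn : ∀ x, 0 ≤ n := fun x => (norm_nonneg _).trans (hg.1 x)
  have hfx : ∀ x, f x ∈ D := fun x => hfD x (mem_closedBall_self (hn x))
  have hfv : ∀ x v, ‖v‖ ≤ n → f x + v ∈ D := fun x v hv =>
    hfD x (add_mem_closedBall_iff_norm.2 hv)
  refine ⟨fun x => ?_, fun x y => ?_⟩
  · have h := hD.norm_image_sub_sub_fderiv_le_of_lipschitzOnWith hΦ hK (hfx x)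
      (hfv x _ (hg.1 x)) (hfx x) (r := ‖g x‖) (by simp) (by simp)
    simp only [add_sub_cancel_left] at h
    calc _ ≤ K * ‖g x‖ * ‖g x‖ := h
      _ = K * ‖g x‖ ^ 2 := by ring
      _ ≤ (K + L * Nf) * n ^ 2 := by
          gcongr
          · exact le_add_of_nonneg_right (mul_nonneg L.coe_nonneg hNf)
          · exact hg.1 x
  · have h₁ := hD.norm_taylorRemainder_sub_le hΦ hΦ' hL (hfx x) (hfx y) (hfv x _ (hg.1 x))
      (hfv y _ (hg.1 x))
    have h₂ := hD.norm_image_sub_sub_fderiv_le_of_lipschitzOnWith hΦ hK (hfx y)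
      (hfv y _ (hg.1 x)) (hfv y _ (hg.1 y)) (by simpa using hg.1 x) (by simpa using hg.1 y)
    rw [add_sub_add_left_eq_sub] at h₂
    have hn₀ := hn x
    dsimp only
    calc _ = ‖(Φ (f x + g x) - Φ (f x) - Φ' (f x) (g x)
            - (Φ (f y + g x) - Φ (f y) - Φ' (f y) (g x)))
          + (Φ (f y + g x) - Φ (f y + g y) - Φ' (f y) (g x - g y))‖ := by
          rw [map_sub]; congr 1; abel
      _ ≤ L * ‖g x‖ * ‖f x - f y‖ * ‖g x‖ + K * n * ‖g x - g y‖ :=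
          norm_add_le_of_le h₁ h₂
      _ ≤ L * n * (Nf * dist x y ^ α) * n + K * n * (n * dist x y ^ α) := by
          gcongr
          exacts [hg.1 x, hf x y, hg.1 x, hg.2 x y]
      _ = (K + L * Nf) * n ^ 2 * dist x y ^ α := by ring

theorem HolderBound.comp_sub_comp {G : E → F} {G' : E → E →L[ℝ] F}
    (hu : HolderBound α n (fun x => g x - f x)) (hD : Convex ℝ D)
    (hG : ∀ z ∈ D, HasFDerivAt G (G' z) z) (hK : LipschitzOnWith K G D)
    (hL : LipschitzOnWith L G' D) (hNf : 0 ≤ Nf) (hf : ∀ x y, ‖f x - f y‖ ≤ Nf * dist x y ^ α)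
    (hfD : ∀ x, closedBall (f x) n ⊆ D) :
    HolderBound α ((K + L * Nf) * n) (fun x => G (g x) - G (f x)) := by
  obtain ⟨hu₁, hu₂⟩ : (∀ x, ‖g x - f x‖ ≤ n) ∧
      ∀ x y, ‖g x - f x - (g y - f y)‖ ≤ n * dist x y ^ α := hu
  have hn : ∀ x, 0 ≤ n := fun x => (norm_nonneg _).trans (hu₁ x)
  have hfx : ∀ x, f x ∈ D := fun x => hfD x (mem_closedBall_self (hn x))
  have hfv : ∀ x v, ‖v‖ ≤ n → f x + v ∈ D := fun x v hv =>
    hfD x (add_mem_closedBall_iff_norm.2 hv)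
  have hgx : ∀ x, f x + (g x - f x) = g x := fun x => add_sub_cancel _ _
  refine ⟨fun x => ?_, fun x y => ?_⟩
  · calc ‖G (g x) - G (f x)‖ ≤ K * ‖g x - f x‖ :=
          hK.norm_sub_le (hgx x ▸ hfv x _ (hu₁ x)) (hfx x)
      _ ≤ (K + L * Nf) * n := by
          gcongr
          · exact le_add_of_nonneg_right (mul_nonneg L.coe_nonneg hNf)
          · exact hu₁ x
  · have h₁ := hD.norm_sub_sub_sub_le_of_lipschitzOnWith hG hL (hfx x) (hfx y)
      (hfv x _ (hu₁ x)) (hfv y _ (hu₁ x))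
    have h₂ := hK.norm_sub_le (hfv y _ (hu₁ x)) (hgx y ▸ hfv y _ (hu₁ y))
    rw [hgx] at h₁
    rw [show f y + (g x - f x) - g y = g x - f x - (g y - f y) by abel] at h₂
    have hn₀ := hn x
    dsimp only
    calc _ = ‖(G (g x) - G (f x) - (G (f y + (g x - f x)) - G (f y)))
          + (G (f y + (g x - f x)) - G (g y))‖ := by congr 1; abel
      _ ≤ L * ‖g x - f x‖ * ‖f x - f y‖ + K * ‖g x - f x - (g y - f y)‖ :=
          norm_add_le_of_le h₁ h₂
      _ ≤ L * n * (Nf * dist x y ^ α) + K * (n * dist x y ^ α) := by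
          gcongr
          exacts [hu₁ x, hf x y, hu₂ x y]
      _ = (K + L * Nf) * n * dist x y ^ α := by ring

end Composition

theorem exists_pos_forall_lt_imp_lt_and_mul_lt {C c ε : ℝ≥0∞} (hC : C ≠ ⊤) (hc : 0 < c)
    (hε : 0 < ε) : ∃ δ > 0, ∀ t < δ, t < c ∧ C * t < ε := by
  refine ⟨min c (ε / C), lt_min hc (ENNReal.div_pos hε.ne' hC), fun t ht => ⟨?_, ?_⟩⟩
  · exact ht.trans_le (min_le_left _ _)
  · rw [mul_comm]
    exact ENNReal.mul_lt_of_lt_div (ht.trans_le (min_le_right _ _))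

theorem composition_differentiable_general {X E F : Type*} [MetricSpace X]
    [NormedAddCommGroup E] [NormedSpace ℝ E]
    [NormedAddCommGroup F] [NormedSpace ℝ F]
    (α : ℝ)
    (Ω : Set E) (hΩc : Convex ℝ Ω)
    (Φ : E → F) (Φ' : E → E →L[ℝ] F) (Φ'' : E → E →L[ℝ] E →L[ℝ] F) (L K₂ : ℝ)
    (hd : ∀ x ∈ Ω, HasFDerivAt Φ (Φ' x) x)
    (hd2 : ∀ x ∈ Ω, HasFDerivAt Φ' (Φ'' x) x)
    (hL : LipschitzOnWith (Real.toNNReal L) Φ'' Ω)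
    (hK₂ : ∀ x ∈ Ω, ‖Φ'' x‖ ≤ K₂) :
    ∀ f : X → E, memO α Ω f →
      -- Fréchet differentiability of `C_Φ` at `f`, with derivative `g ↦ (x ↦ Φ'(f x) (g x))`
      ((∀ ε : ℝ≥0∞, 0 < ε → ∃ δ : ℝ≥0∞, 0 < δ ∧
        ∀ g : X → E, memO α Ω (fun x => f x + g x) → holderNorm α g < δ →
          holderNorm α (fun x => Φ (f x + g x) - Φ (f x) - Φ' (f x) (g x))
            ≤ ε * holderNorm α g) ∧
      -- continuity of the derivative assignment `f ↦ (x ↦ Φ'(f x))` in `C^{0,α}`-norm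
      (∀ ε : ℝ≥0∞, 0 < ε → ∃ δ : ℝ≥0∞, 0 < δ ∧
        ∀ g : X → E, memO α Ω g → holderNorm α (fun x => g x - f x) < δ →
          holderNorm α (fun x => Φ' (g x) - Φ' (f x)) < ε)) := by
  rintro f ⟨hfN, -, ε₀, hε₀, hfΩ⟩
  obtain ⟨c, hc, hcε₀⟩ := exists_between hε₀
  have hball : ∀ {t : ℝ≥0∞}, t < ENNReal.ofReal c → ∀ x, closedBall (f x) t.toReal ⊆ Ω :=
    fun ht x => (closedBall_subset_ball ((toReal_le_of_le_ofReal hc.le ht.le).trans_lt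
      (hcε₀.trans_le (hfΩ x)))).trans ball_infDist_compl_subset
  have hK : LipschitzOnWith K₂.toNNReal Φ' Ω :=
    hΩc.lipschitzOnWith_of_nnnorm_hasFDerivWithin_le (fun z hz => (hd2 z hz).hasFDerivWithinAt)
      (fun z hz => NNReal.le_toNNReal_of_coe_le (hK₂ z hz))
  obtain ⟨-, hf⟩ := holderBound_toReal_holderNorm hfN.ne
  set A := K₂.toNNReal + L.toNNReal * (holderNorm α f).toReal
  have hδ : ∀ ε > 0, ∃ δ > 0, ∀ t < δ, t < ENNReal.ofReal c ∧ 2 * ENNReal.ofReal A * t < ε :=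
    fun ε hε => exists_pos_forall_lt_imp_lt_and_mul_lt (mul_ne_top ofNat_ne_top ofReal_ne_top)
      (ofReal_pos.2 hc) hε
  refine ⟨fun ε hε => ?_, fun ε hε => ?_⟩
  · obtain ⟨δ, hδ, hδε⟩ := hδ ε hε
    refine ⟨δ, hδ, fun g _ hg => ?_⟩
    obtain ⟨hgc, hgε⟩ := hδε _ hg
    have hgN : holderNorm α g ≠ ⊤ := (hgc.trans ofReal_lt_top).ne
    calc _ ≤ 2 * ENNReal.ofReal (A * (holderNorm α g).toReal ^ 2) :=
          holderNorm_le_of_holderBound <| (holderBound_toReal_holderNorm hgN).taylorRemainder_comp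
            hΩc hd hd2 hK hL toReal_nonneg hf (hball hgc)
      _ = 2 * ENNReal.ofReal A * holderNorm α g * holderNorm α g := by
          rw [ofReal_mul (by positivity), ofReal_pow toReal_nonneg, ofReal_toReal hgN]; ring
      _ ≤ ε * holderNorm α g := by gcongr
  · obtain ⟨δ, hδ, hδε⟩ := hδ ε hε
    refine ⟨δ, hδ, fun g _ hg => ?_⟩
    obtain ⟨hgc, hgε⟩ := hδε _ hg
    have hgN : holderNorm α (fun x => g x - f x) ≠ ⊤ := (hgc.trans ofReal_lt_top).ne
    calc _ ≤ 2 * ENNReal.ofReal (A * (holderNorm α (fun x => g x - f x)).toReal) :=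
          holderNorm_le_of_holderBound <| (holderBound_toReal_holderNorm hgN).comp_sub_comp
            hΩc hd2 hK hL toReal_nonneg hf (hball hgc)
      _ = 2 * ENNReal.ofReal A * holderNorm α (fun x => g x - f x) := by
          rw [ofReal_mul (by positivity), ofReal_toReal hgN]; ring
      _ < ε := hgε

/-- if `Φ ∈ C^{2,1}(Ω, F)` on the open convex set `Ω`, then the composition
operator `C_Φ[f] := Φ ∘ f` is continuously Fréchet differentiable from `𝒪^{0,α}(X, Ω)` into
`C^{0,α}(X, F)`, with derivative `(DC_Φ[f]·g)(x) = DΦ(f(x))·g(x)`: the first-order Taylor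
remainder is `o(‖g‖_{C^{0,α}})`, and `f ↦ DΦ ∘ f` is continuous in `C^{0,α}`-norm. -/
theorem composition_differentiable {X E F : Type*} [MetricSpace X]
    [NormedAddCommGroup E] [NormedSpace ℝ E] [CompleteSpace E]
    [NormedAddCommGroup F] [NormedSpace ℝ F] [CompleteSpace F]
    (α : ℝ) (hα0 : 0 < α) (hα1 : α ≤ 1)
    (Ω : Set E) (hΩo : IsOpen Ω) (hΩc : Convex ℝ Ω)
    (Φ : E → F) (Φ' : E → E →L[ℝ] F) (Φ'' : E → E →L[ℝ] E →L[ℝ] F) (L K₁ K₂ : ℝ)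
    (hd : ∀ x ∈ Ω, HasFDerivAt Φ (Φ' x) x)
    (hd2 : ∀ x ∈ Ω, HasFDerivAt Φ' (Φ'' x) x)
    (hL : LipschitzOnWith (Real.toNNReal L) Φ'' Ω)
    (hK₁ : ∀ x ∈ Ω, ‖Φ' x‖ ≤ K₁) (hK₂ : ∀ x ∈ Ω, ‖Φ'' x‖ ≤ K₂) :
    ∀ f : X → E, memO α Ω f →
      -- Fréchet differentiability of `C_Φ` at `f`, with derivative `g ↦ (x ↦ Φ'(f x) (g x))`
      ((∀ ε : ℝ≥0∞, 0 < ε → ∃ δ : ℝ≥0∞, 0 < δ ∧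
        ∀ g : X → E, memO α Ω (fun x => f x + g x) → holderNorm α g < δ →
          holderNorm α (fun x => Φ (f x + g x) - Φ (f x) - Φ' (f x) (g x))
            ≤ ε * holderNorm α g) ∧
      -- continuity of the derivative assignment `f ↦ (x ↦ Φ'(f x))` in `C^{0,α}`-norm
      (∀ ε : ℝ≥0∞, 0 < ε → ∃ δ : ℝ≥0∞, 0 < δ ∧
        ∀ g : X → E, memO α Ω g → holderNorm α (fun x => g x - f x) < δ →
          holderNorm α (fun x => Φ' (g x) - Φ' (f x)) < ε)) :=
  composition_differentiable_general α Ω hΩc Φ Φ' Φ'' L K₂ hd hd2 hL hK₂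
end

section
/- For k ∈ (0,1) and a smooth function u(x,y), suppose the immersion Φ[u] (as defined via the Darboux coordinates of the upper half-space model) has extrinsic curvature K[u] = S² + (1/(u_{xx}+u))(SC + T(u_{xy}+u_x)² - T(u_{xx}+u)(u_{yy}+u_y) - (u_{yy}+u_y)), where T := u + u_y, C := 1/√(1+T²), S := T/√(1+T²). Then the equation K[u] = k is equivalent to k u_{xx} + u_{yy} - (1-k) u = F(u, Du, D²u), where F is a real-analytic function of its arguments vanishing together with its first derivatives at (0,0,0). -/
/-!
Multiplying `K[u] - k` by `(u_xx + u)(1 + T²)` clears both the square roots (`S² = T²/(1+T²)`,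
`SC = T/(1+T²)`) and the denominator, and leaves `T · H - (k u_xx + u_yy - (1-k) u)` for an
explicit polynomial `H` in the jet. So `F = T · H` is a polynomial, hence analytic, and since
`T` and `H` both vanish at the zero jet, `F` vanishes there to second order.
-/

/-- The extrinsic curvature `K[u]` of the immersion `Φ[u]`, as a function of the point
values `p = (u, u_x, u_y, u_xx, u_xy, u_yy)`: with `T = u + u_y`, `C = 1/√(1+T²)`,
`S = T/√(1+T²)`,
`K = S² + (1/(u_xx+u)) (SC + T(u_xy+u_x)² - T(u_xx+u)(u_yy+u_y) - (u_yy+u_y))`. -/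
noncomputable def extCurv (p : ℝ × ℝ × ℝ × ℝ × ℝ × ℝ) : ℝ :=
  let u := p.1; let ux := p.2.1; let uy := p.2.2.1
  let uxx := p.2.2.2.1; let uxy := p.2.2.2.2.1; let uyy := p.2.2.2.2.2
  let T := u + uy
  let C := 1 / Real.sqrt (1 + T ^ 2)
  let S := T / Real.sqrt (1 + T ^ 2)
  S ^ 2 + (1 / (uxx + u)) *
    (S * C + T * (uxy + ux) ^ 2 - T * (uxx + u) * (uyy + uy) - (uyy + uy))

open scoped ContDiff

theorem HasFDerivAt.mul_of_eq_zero {𝕜 E 𝔸 : Type*} [NontriviallyNormedField 𝕜]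
    [NormedAddCommGroup E] [NormedSpace 𝕜 E] [NormedCommRing 𝔸] [NormedAlgebra 𝕜 𝔸]
    {f g : E → 𝔸} {f' g' : E →L[𝕜] 𝔸} {x : E}
    (hf : HasFDerivAt f f' x) (hg : HasFDerivAt g g' x) (hfx : f x = 0) (hgx : g x = 0) :
    HasFDerivAt (fun y => f y * g y) (0 : E →L[𝕜] 𝔸) x := by
  convert hf.fun_mul hg using 1
  ext v
  simp [hfx, hgx]

namespace ExtCurv

def jetT (p : ℝ × ℝ × ℝ × ℝ × ℝ × ℝ) : ℝ := p.1 + p.2.2.1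

def cofactor (k : ℝ) (p : ℝ × ℝ × ℝ × ℝ × ℝ × ℝ) : ℝ :=
  (1 - k) * (p.2.2.2.1 + p.1) * jetT p
    + (1 + jetT p ^ 2) * (p.2.2.2.2.1 + p.2.1) ^ 2
    - (1 + jetT p ^ 2) * (p.2.2.2.1 + p.1) * (p.2.2.2.2.2 + p.2.2.1)
    - jetT p * (p.2.2.2.2.2 + p.2.2.1)

def remainder (k : ℝ) (p : ℝ × ℝ × ℝ × ℝ × ℝ × ℝ) : ℝ := jetT p * cofactor k p

theorem contDiff_jetT : ContDiff ℝ ω jetT := by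
  unfold jetT; fun_prop

theorem contDiff_cofactor (k : ℝ) : ContDiff ℝ ω (cofactor k) := by
  unfold cofactor jetT; fun_prop

theorem contDiff_remainder (k : ℝ) : ContDiff ℝ ω (remainder k) :=
  contDiff_jetT.mul (contDiff_cofactor k)

theorem remainder_zero (k : ℝ) : remainder k 0 = 0 := by
  simp [remainder, jetT]

theorem hasFDerivAt_remainder_zero (k : ℝ) : HasFDerivAt (remainder k) (0 : _ →L[ℝ] ℝ) 0 :=
  HasFDerivAt.mul_of_eq_zero (contDiff_jetT.differentiable (by simp) 0).hasFDerivAt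
    ((contDiff_cofactor k).differentiable (by simp) 0).hasFDerivAt
    (by simp [jetT]) (by simp [cofactor, jetT])

theorem extCurv_eq (u ux uy uxx uxy uyy : ℝ) :
    extCurv (u, ux, uy, uxx, uxy, uyy) =
      (u + uy) ^ 2 / (1 + (u + uy) ^ 2) + (1 / (uxx + u)) *
        ((u + uy) / (1 + (u + uy) ^ 2) + (u + uy) * (uxy + ux) ^ 2
          - (u + uy) * (uxx + u) * (uyy + uy) - (uyy + uy)) := by
  have hsq : Real.sqrt (1 + (u + uy) ^ 2) ^ 2 = 1 + (u + uy) ^ 2 :=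
    Real.sq_sqrt (by positivity)
  simp only [extCurv, div_pow, hsq, div_mul_div_comm, mul_one, ← sq]

theorem extCurv_sub_eq (k u ux uy uxx uxy uyy : ℝ) (h : uxx + u ≠ 0) :
    extCurv (u, ux, uy, uxx, uxy, uyy) - k =
      (remainder k (u, ux, uy, uxx, uxy, uyy) - (k * uxx + uyy - (1 - k) * u)) /
        ((uxx + u) * (1 + (u + uy) ^ 2)) := by
  rw [extCurv_eq]
  simp only [remainder, jetT, cofactor]
  field_simp
  ring

theorem extCurv_eq_iff (k u ux uy uxx uxy uyy : ℝ) (h : uxx + u ≠ 0) :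
    extCurv (u, ux, uy, uxx, uxy, uyy) = k ↔
      k * uxx + uyy - (1 - k) * u = remainder k (u, ux, uy, uxx, uxy, uyy) := by
  have hden : (uxx + u) * (1 + (u + uy) ^ 2) ≠ 0 := mul_ne_zero h (by positivity)
  rw [← sub_eq_zero, extCurv_sub_eq k u ux uy uxx uxy uyy h, div_eq_zero_iff,
    or_iff_left hden, sub_eq_zero, eq_comm]

end ExtCurv

open ExtCurv in
theorem gauss_curvature_equation_quasilinear_general (k : ℝ) :
    ∃ F : (ℝ × ℝ × ℝ × ℝ × ℝ × ℝ) → ℝ,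
      AnalyticAt ℝ F 0 ∧ F 0 = 0 ∧ fderiv ℝ F 0 = 0 ∧
      ∃ W ∈ nhds (0 : ℝ × ℝ × ℝ × ℝ × ℝ × ℝ),
        (∀ p ∈ W, AnalyticAt ℝ F p) ∧
        ∀ p ∈ W, p.2.2.2.1 + p.1 ≠ 0 →
          (extCurv p = k ↔
            k * p.2.2.2.1 + p.2.2.2.2.2 - (1 - k) * p.1 = F p) := by
  have hF : ∀ p, AnalyticAt ℝ (remainder k) p := fun p =>
    (contDiff_remainder k).contDiffAt.analyticAt
  refine ⟨remainder k, hF 0, remainder_zero k, (hasFDerivAt_remainder_zero k).fderiv,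
    Set.univ, Filter.univ_mem, fun p _ => hF p, ?_⟩
  rintro ⟨u, ux, uy, uxx, uxy, uyy⟩ - h
  exact extCurv_eq_iff k u ux uy uxx uxy uyy h

/-- for `k ∈ (0,1)`, the constant extrinsic curvature equation `K[u] = k`
is equivalent, near `0` (where `u_xx + u ≠ 0`), to the quasilinear equation
`k u_xx + u_yy - (1-k) u = F(u, Du, D²u)`, where `F` is real-analytic near `0` and
vanishes together with its first derivatives at `(0,0,0)`. -/
theorem gauss_curvature_equation_quasilinear (k : ℝ) (hk0 : 0 < k) (hk1 : k < 1) :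
    ∃ F : (ℝ × ℝ × ℝ × ℝ × ℝ × ℝ) → ℝ,
      AnalyticAt ℝ F 0 ∧ F 0 = 0 ∧ fderiv ℝ F 0 = 0 ∧
      ∃ W ∈ nhds (0 : ℝ × ℝ × ℝ × ℝ × ℝ × ℝ),
        (∀ p ∈ W, AnalyticAt ℝ F p) ∧
        ∀ p ∈ W, p.2.2.2.1 + p.1 ≠ 0 →
          (extCurv p = k ↔
            k * p.2.2.2.1 + p.2.2.2.2.2 - (1 - k) * p.1 = F p) :=
  gauss_curvature_equation_quasilinear_general k
end
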